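/- arXiv:0804.3822 — 4 statements merged into one kernel-verified Lean document; each statement's English description precedes it below -/
import Mathlib

section
/- Let X be a metric space, let m ≥ 1, and for each j = 1, …, m let h_j : X → X be continuous. Let K be a nonempty compact subset of X such that ⋃_{j=1}^m h_j⁻¹(K) ⊆ K and h_j⁻¹({z}) ≠ ∅ for every z ∈ K and every j. Then R := R_{K,b}(h_1, …, h_m) is nonempty and compact; moreover R = ⋃_{x ∈ {1,…,m}^ℕ} ⋂_{k=1}^∞ h_{x_1}⁻¹(h_{x_2}⁻¹(⋯ h_{x_k}⁻¹(K) ⋯)), R = ⋃_{j=1}^m h_j⁻¹(R), and h_j⁻¹({z}) ≠ ∅ for every z ∈ R and every j, so that (R, (h_1, …, h_m)) is a backward self-similar system. -/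
open Set

/-- `h_w⁻¹(L)` for a finite word `w = (w₁, …, w_k)`, encoded as the list `[w₁, …, w_k]`,
namely `h_{w₁}⁻¹(h_{w₂}⁻¹(⋯ h_{w_k}⁻¹(L) ⋯))`. -/
def bwdPre {X : Type*} {m : ℕ} (h : Fin m → X → X) (L : Set X) : List (Fin m) → Set X
  | [] => L
  | a :: w => h a ⁻¹' bwdPre h L w

/-- The truncation `x|k` of an infinite word `x`. -/
def wordTrunc {m : ℕ} (x : ℕ → Fin m) (k : ℕ) : List (Fin m) :=
  List.ofFn fun i : Fin k => x i.val

/-- `L_x = ⋂_{j ≥ 1} h_{x|j}⁻¹(L)`. -/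
def bwdLimSet {X : Type*} {m : ℕ} (h : Fin m → X → X) (L : Set X) (x : ℕ → Fin m) : Set X :=
  ⋂ j : ℕ, bwdPre h L (wordTrunc x (j + 1))

/-- `R_{K,b}(h₁, …, h_m) = ⋂_{n ≥ 1} ⋃_{|w| = n} h_{w₁}⁻¹(h_{w₂}⁻¹(⋯ h_{w_n}⁻¹(K) ⋯))`. -/
def RKb {X : Type*} {m : ℕ} (h : Fin m → X → X) (K : Set X) : Set X :=
  ⋂ n : ℕ, ⋃ w : Fin (n + 1) → Fin m, bwdPre h K (List.ofFn w)

section Aux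

variable {X : Type*} {m : ℕ} (h : Fin m → X → X) (K : Set X)

lemma wordTrunc_succ_last (x : ℕ → Fin m) (k : ℕ) :
    wordTrunc x (k+1) = wordTrunc x k ++ [x k] := by
  unfold wordTrunc
  rw [List.ofFn_succ']
  simp [List.concat_eq_append]

lemma wordTrunc_succ_head (x : ℕ → Fin m) (k : ℕ) :
    wordTrunc x (k+1) = x 0 :: wordTrunc (fun n => x (n+1)) k := by
  unfold wordTrunc
  rw [List.ofFn_succ]
  simp

lemma bwdPre_append (L : Set X) (u v : List (Fin m)) :
    bwdPre h L (u ++ v) = bwdPre h (bwdPre h L v) u := by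
  induction u with
  | nil => rfl
  | cons a u ih =>
    show h a ⁻¹' bwdPre h L (u ++ v) = h a ⁻¹' bwdPre h (bwdPre h L v) u
    rw [ih]

lemma bwdPre_mono {L L' : Set X} (hLL' : L ⊆ L') (w : List (Fin m)) :
    bwdPre h L w ⊆ bwdPre h L' w := by
  induction w with
  | nil => exact hLL'
  | cons a w ih => exact Set.preimage_mono ih

lemma bwdPre_subset (hsub : (⋃ j, h j ⁻¹' K) ⊆ K) (w : List (Fin m)) :
    bwdPre h K w ⊆ K := by
  induction w with
  | nil => exact subset_rfl
  | cons a w ih =>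
    refine subset_trans ?_ hsub
    exact subset_trans (Set.preimage_mono ih) (Set.subset_iUnion (fun j => h j ⁻¹' K) a)

lemma bwdPre_prefix_subset (hsub : (⋃ j, h j ⁻¹' K) ⊆ K) (u v : List (Fin m)) :
    bwdPre h K (u ++ v) ⊆ bwdPre h K u := by
  rw [bwdPre_append]
  exact bwdPre_mono h (bwdPre_subset h K hsub v) u

lemma bwdPre_closed [TopologicalSpace X] (hcont : ∀ j, Continuous (h j)) (hK : IsClosed K)
    (w : List (Fin m)) : IsClosed (bwdPre h K w) := by
  induction w with
  | nil => exact hK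
  | cons a w ih => exact ih.preimage (hcont a)

lemma bwdPre_nonempty (hsub : (⋃ j, h j ⁻¹' K) ⊆ K) (hKne : K.Nonempty)
    (hfib : ∀ z ∈ K, ∀ j, (h j ⁻¹' ({z} : Set X)).Nonempty) (w : List (Fin m)) :
    (bwdPre h K w).Nonempty := by
  induction w with
  | nil => exact hKne
  | cons a w ih =>
    obtain ⟨z, hz⟩ := ih
    obtain ⟨y, hy⟩ := hfib z (bwdPre_subset h K hsub w hz) a
    exact ⟨y, by simpa only [bwdPre, Set.mem_preimage, Set.mem_singleton_iff.mp hy] using hz⟩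

end Aux

/-- If `K` is a nonempty compact set with `⋃_j h_j⁻¹(K) ⊆ K` and nonempty fibers over `K`,
then `R := R_{K,b}(h₁, …, h_m)` is nonempty and compact, equals
`⋃_{x ∈ {1,…,m}^ℕ} ⋂_{k ≥ 1} h_{x₁}⁻¹(⋯ h_{x_k}⁻¹(K) ⋯)`, satisfies
`R = ⋃_{j=1}^m h_j⁻¹(R)` and has nonempty fibers over `R`; that is,
`(R, (h₁, …, h_m))` is a backward self-similar system. -/
theorem RKb_backward_self_similar
    {X : Type*} [MetricSpace X] {m : ℕ} (hm : 1 ≤ m)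
    (h : Fin m → X → X) (hcont : ∀ j, Continuous (h j))
    (K : Set X) (hKne : K.Nonempty) (hKcp : IsCompact K)
    (hsub : (⋃ j, h j ⁻¹' K) ⊆ K)
    (hfib : ∀ z ∈ K, ∀ j, (h j ⁻¹' ({z} : Set X)).Nonempty) :
    (RKb h K).Nonempty ∧ IsCompact (RKb h K) ∧
    (RKb h K = ⋃ x : ℕ → Fin m, ⋂ k : ℕ, bwdPre h K (wordTrunc x (k + 1))) ∧
    (RKb h K = ⋃ j, h j ⁻¹' RKb h K) ∧
    (∀ z ∈ RKb h K, ∀ j, (h j ⁻¹' ({z} : Set X)).Nonempty) := by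
  have hKcl : IsClosed K := hKcp.isClosed
  set U : ℕ → Set X := fun n => ⋃ w : Fin (n + 1) → Fin m, bwdPre h K (List.ofFn w) with hU
  have hRKb : RKb h K = ⋂ n, U n := rfl
  have hUsubK : ∀ n, U n ⊆ K := fun n =>
    Set.iUnion_subset fun w => bwdPre_subset h K hsub _
  have hUclosed : ∀ n, IsClosed (U n) := fun n =>
    isClosed_iUnion_of_finite fun w => bwdPre_closed h K hcont hKcl _
  have hUne : ∀ n, (U n).Nonempty := by
    intro n
    obtain ⟨z, hz⟩ := bwdPre_nonempty h K hsub hKne hfib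
      (List.ofFn (fun _ : Fin (n+1) => (⟨0, hm⟩ : Fin m)))
    exact ⟨z, Set.mem_iUnion.2 ⟨_, hz⟩⟩
  have hUdec : ∀ n, U (n + 1) ⊆ U n := by
    intro n z hz
    obtain ⟨w, hw⟩ := Set.mem_iUnion.1 hz
    refine Set.mem_iUnion.2 ⟨fun i => w i.castSucc, ?_⟩
    have : List.ofFn w = List.ofFn (fun i => w i.castSucc) ++ [w (Fin.last (n+1))] := by
      rw [List.ofFn_succ']; simp [List.concat_eq_append]
    rw [this] at hw
    exact bwdPre_prefix_subset h K hsub _ _ hw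
  have hRne : (RKb h K).Nonempty := by
    rw [hRKb]
    exact IsCompact.nonempty_iInter_of_sequence_nonempty_isCompact_isClosed U hUdec hUne
      (hKcp.of_isClosed_subset (hUclosed 0) (hUsubK 0)) hUclosed
  have hRsubK : RKb h K ⊆ K := (Set.iInter_subset U 0).trans (hUsubK 0)
  have hRcl : IsClosed (RKb h K) := isClosed_iInter hUclosed
  have hRcp : IsCompact (RKb h K) := hKcp.of_isClosed_subset hRcl hRsubK
  -- key: wordTrunc x (k+1) as ofFn
  have htrunc : ∀ (x : ℕ → Fin m) (k : ℕ),
      wordTrunc x (k + 1) = List.ofFn (fun i : Fin (k+1) => x i.val) := fun _ _ => rfl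
  -- the infinite-word representation
  have hrep : RKb h K = ⋃ x : ℕ → Fin m, ⋂ k : ℕ, bwdPre h K (wordTrunc x (k + 1)) := by
    apply Set.Subset.antisymm
    · intro z hz
      -- König via compactness of (ℕ → Fin m)
      set S : ℕ → Set (ℕ → Fin m) :=
        fun n => {x | z ∈ bwdPre h K (wordTrunc x (n + 1))} with hS
      have hSclosed : ∀ n, IsClosed (S n) := by
        intro n
        have : S n = ⋃ (w : Fin (n+1) → Fin m) (_ : z ∈ bwdPre h K (List.ofFn w)),
            {x : ℕ → Fin m | ∀ i : Fin (n+1), x i.val = w i} := by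
          ext x
          simp only [hS, Set.mem_setOf_eq, Set.mem_iUnion]
          constructor
          · intro hx
            exact ⟨fun i => x i.val, by rwa [htrunc] at hx, fun i => rfl⟩
          · rintro ⟨w, hw, hxw⟩
            have : wordTrunc x (n + 1) = List.ofFn w := by
              rw [htrunc]; congr 1; funext i; exact hxw i
            rw [this]; exact hw
        rw [this]
        refine isClosed_iUnion_of_finite fun w => ?_
        refine isClosed_iUnion_of_finite fun _ => ?_
        have : {x : ℕ → Fin m | ∀ i : Fin (n+1), x i.val = w i}
            = ⋂ i : Fin (n+1), {x : ℕ → Fin m | x i.val = w i} := by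
          ext x; simp
        rw [this]
        exact isClosed_iInter fun i => isClosed_eq (continuous_apply _) continuous_const
      have hSne : ∀ n, (S n).Nonempty := by
        intro n
        have hz' : z ∈ U n := Set.mem_iInter.1 hz n
        obtain ⟨w, hw⟩ := Set.mem_iUnion.1 hz'
        refine ⟨fun i => if hi : i < n + 1 then w ⟨i, hi⟩ else ⟨0, hm⟩, ?_⟩
        have : wordTrunc (fun i => if hi : i < n + 1 then w ⟨i, hi⟩ else ⟨0, hm⟩) (n+1)
            = List.ofFn w := by
          rw [htrunc]; congr 1; funext i
          simp [i.isLt]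
        simp only [hS, Set.mem_setOf_eq, this]
        exact hw
      have hSdec : ∀ n, S (n + 1) ⊆ S n := by
        intro n x hx
        simp only [hS, Set.mem_setOf_eq] at hx ⊢
        rw [wordTrunc_succ_last] at hx
        exact bwdPre_prefix_subset h K hsub _ _ hx
      have : (⋂ n, S n).Nonempty :=
        IsCompact.nonempty_iInter_of_sequence_nonempty_isCompact_isClosed S hSdec hSne
          ((hSclosed 0).isCompact) hSclosed
      obtain ⟨x, hx⟩ := this
      exact Set.mem_iUnion.2 ⟨x, Set.mem_iInter.2 fun k => Set.mem_iInter.1 hx k⟩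
    · intro z hz
      obtain ⟨x, hx⟩ := Set.mem_iUnion.1 hz
      refine Set.mem_iInter.2 fun n => Set.mem_iUnion.2 ⟨fun i : Fin (n+1) => x i.val, ?_⟩
      rw [← htrunc]
      exact Set.mem_iInter.1 hx n
  refine ⟨hRne, hRcp, hrep, ?_, ?_⟩
  · apply Set.Subset.antisymm
    · intro z hz
      rw [hrep] at hz
      obtain ⟨x, hx⟩ := Set.mem_iUnion.1 hz
      refine Set.mem_iUnion.2 ⟨x 0, ?_⟩
      have : h (x 0) z ∈ RKb h K := by
        refine Set.mem_iInter.2 fun n => ?_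
        have hzx := Set.mem_iInter.1 hx (n + 1)
        rw [wordTrunc_succ_head] at hzx
        refine Set.mem_iUnion.2 ⟨fun i : Fin (n+1) => x (i.val + 1), ?_⟩
        have : wordTrunc (fun k => x (k+1)) (n+1)
            = List.ofFn (fun i : Fin (n+1) => x (i.val + 1)) := rfl
        rw [← this]
        exact hzx
      exact this
    · intro z hz
      obtain ⟨j, hj⟩ := Set.mem_iUnion.1 hz
      have hjz : h j z ∈ RKb h K := hj
      refine Set.mem_iInter.2 fun n => ?_
      cases n with
      | zero =>
        refine Set.mem_iUnion.2 ⟨fun _ : Fin 1 => j, ?_⟩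
        show z ∈ h j ⁻¹' bwdPre h K []
        exact hRsubK hjz
      | succ n =>
        have := Set.mem_iInter.1 hjz n
        obtain ⟨w, hw⟩ := Set.mem_iUnion.1 this
        refine Set.mem_iUnion.2 ⟨Fin.cons j w, ?_⟩
        have : List.ofFn (Fin.cons j w : Fin (n+2) → Fin m) = j :: List.ofFn w := by
          rw [List.ofFn_succ]; simp
        rw [this]
        exact hw
  · intro z hz j
    exact hfib z (hRsubK hz) j
end

section
/- Let X be a compact metric space, let h_1, …, h_m : X → X be continuous maps each of which is open and surjective, and let G be the semigroup generated by h_1, …, h_m. Suppose J(G) ≠ ∅. Then J(G) is a nonempty compact set, J(G) = ⋃_{j=1}^m h_j⁻¹(J(G)), and h_j⁻¹({z}) ≠ ∅ for every z ∈ J(G) and every j; that is, (J(G), (h_1, …, h_m)) is a backward self-similar system. -/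
open Set

/-- The semigroup (set of maps, closed under composition) generated by `h₁, …, h_m`:
all compositions `h_{i_n} ∘ ⋯ ∘ h_{i_1}` over nonempty tuples of indices. -/
def genSemigroup {X : Type*} {m : ℕ} (h : Fin m → X → X) : Set (X → X) :=
  {f | ∃ l : List (Fin m), l ≠ [] ∧ f = l.foldr (fun i g => h i ∘ g) id}

/-- The Fatou set of a set `G` of self-maps of a metric space `X`: the set of points
having an open neighborhood on which the family `G` is equicontinuous. -/
def fatouSet {X : Type*} [MetricSpace X] (G : Set (X → X)) : Set X :=
  {z | ∃ U : Set X, IsOpen U ∧ z ∈ U ∧ EquicontinuousOn (fun g : G => (g : X → X)) U}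

/-- The Julia set `J(G) = X \ F(G)`. -/
def juliaSet {X : Type*} [MetricSpace X] (G : Set (X → X)) : Set X :=
  (fatouSet G)ᶜ

lemma foldr_comp_base {X : Type*} {m : ℕ} (h : Fin m → X → X) (l : List (Fin m))
    (b : X → X) :
    l.foldr (fun i g => h i ∘ g) b = l.foldr (fun i g => h i ∘ g) id ∘ b := by
  induction l with
  | nil => rfl
  | cons a l ih => simp only [List.foldr_cons, ih]; rfl

lemma comp_mem_gen {X : Type*} {m : ℕ} {h : Fin m → X → X} {f : X → X}
    (hf : f ∈ genSemigroup h) (j : Fin m) : f ∘ h j ∈ genSemigroup h := by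
  obtain ⟨l, hl, rfl⟩ := hf
  refine ⟨l ++ [j], by simp, ?_⟩
  rw [List.foldr_append, List.foldr_cons, List.foldr_nil, foldr_comp_base h l (h j ∘ id)]
  rfl

lemma gen_cases {X : Type*} {m : ℕ} {h : Fin m → X → X} {f : X → X}
    (hf : f ∈ genSemigroup h) :
    (∃ j, f = h j) ∨ ∃ j, ∃ f' ∈ genSemigroup h, f = f' ∘ h j := by
  obtain ⟨l, hl, rfl⟩ := hf
  rcases List.eq_nil_or_concat l with rfl | ⟨l', j, rfl⟩
  · exact absurd rfl hl
  rcases eq_or_ne l' [] with rfl | hl'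
  · left
    exact ⟨j, by simp⟩
  · right
    refine ⟨j, l'.foldr (fun i g => h i ∘ g) id, ⟨l', hl', rfl⟩, ?_⟩
    simp only [List.concat_eq_append, List.foldr_append, List.foldr_cons, List.foldr_nil]
    rw [foldr_comp_base h l' (h j ∘ id)]
    rfl

lemma fatou_isOpen {X : Type*} [MetricSpace X] (G : Set (X → X)) :
    IsOpen (fatouSet G) := by
  rw [isOpen_iff_forall_mem_open]
  rintro z ⟨U, hUo, hzU, hequi⟩
  exact ⟨U, fun y hy => ⟨U, hUo, hy, hequi⟩, hUo, hzU⟩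

lemma fatou_fwd {X : Type*} [MetricSpace X] {m : ℕ} {h : Fin m → X → X}
    (hopen : ∀ j, IsOpenMap (h j)) (j : Fin m)
    {z : X} (hz : z ∈ fatouSet (genSemigroup h)) :
    h j z ∈ fatouSet (genSemigroup h) := by
  obtain ⟨U, hUo, hzU, hequi⟩ := hz
  refine ⟨h j '' U, hopen j U hUo, ⟨z, hzU, rfl⟩, ?_⟩
  rintro w ⟨x, hxU, rfl⟩
  intro V hV
  have hx := hequi x hxU V hV
  rw [Filter.eventually_iff, mem_nhdsWithin] at hx
  obtain ⟨W, hWo, hxW, hWU⟩ := hx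
  apply mem_nhdsWithin_of_mem_nhds
  have himg : IsOpen (h j '' (W ∩ U)) := hopen j _ (hWo.inter hUo)
  refine Filter.mem_of_superset (himg.mem_nhds ⟨x, ⟨hxW, hxU⟩, rfl⟩) ?_
  rintro w' ⟨y, hyWU, rfl⟩
  intro g
  have hcomp : (g : X → X) ∘ h j ∈ genSemigroup h := comp_mem_gen g.2 j
  exact hWU hyWU ⟨_, hcomp⟩

lemma fatou_bwd {X : Type*} [MetricSpace X] {m : ℕ} {h : Fin m → X → X}
    (hcont : ∀ j, Continuous (h j))
    {z : X} (hz : ∀ j, h j z ∈ fatouSet (genSemigroup h)) :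
    z ∈ fatouSet (genSemigroup h) := by
  choose U hUo hzU hequi using hz
  refine ⟨⋂ j, h j ⁻¹' U j, isOpen_iInter_of_finite fun j => (hUo j).preimage (hcont j),
    mem_iInter.2 fun j => hzU j, ?_⟩
  intro x hx V hV
  have hxj : ∀ j, h j x ∈ U j := fun j => mem_iInter.1 hx j
  have hP : ∀ j, ∀ᶠ y in nhdsWithin x (⋂ j, h j ⁻¹' U j),
      (∀ g : genSemigroup h, ((g : X → X) (h j x), (g : X → X) (h j y)) ∈ V) ∧
      (h j x, h j y) ∈ V := by
    intro j
    have htend : Filter.Tendsto (h j) (nhdsWithin x (⋂ j, h j ⁻¹' U j))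
        (nhdsWithin (h j x) (U j)) := by
      apply ((hcont j).continuousWithinAt).tendsto_nhdsWithin
      intro y hy
      exact mem_iInter.1 hy j
    have hE := hequi j (h j x) (hxj j) V hV
    have hC : ∀ᶠ y' in nhdsWithin (h j x) (U j), (h j x, y') ∈ V :=
      Filter.Eventually.filter_mono nhdsWithin_le_nhds (UniformSpace.mem_nhds_iff.2
        ⟨V, hV, fun y' hy' => hy'⟩)
    exact htend.eventually (hE.and hC)
  have hall := Filter.eventually_all.2 hP
  filter_upwards [hall] with y hy g
  rcases gen_cases g.2 with ⟨j, hgj⟩ | ⟨j, f, hf, hgj⟩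
  · have := (hy j).2
    simp only [hgj]
    exact this
  · have := (hy j).1 ⟨f, hf⟩
    simp only [hgj]
    exact this

/-- If `h₁, …, h_m` are continuous, open, surjective self-maps of a compact metric space
`X`, `G` is the semigroup they generate, and `J(G) ≠ ∅`, then `J(G)` is a nonempty compact
set with `J(G) = ⋃_{j=1}^m h_j⁻¹(J(G))` and `h_j⁻¹({z}) ≠ ∅` for every `z ∈ J(G)`; that
is, `(J(G), (h₁, …, h_m))` is a backward self-similar system. -/
theorem julia_backward_self_similar
    {X : Type*} [MetricSpace X] [CompactSpace X] {m : ℕ} (hm : 1 ≤ m)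
    (h : Fin m → X → X) (hcont : ∀ j, Continuous (h j))
    (hopen : ∀ j, IsOpenMap (h j)) (hsurj : ∀ j, Function.Surjective (h j))
    (hJne : (juliaSet (genSemigroup h)).Nonempty) :
    (juliaSet (genSemigroup h)).Nonempty ∧
    IsCompact (juliaSet (genSemigroup h)) ∧
    (juliaSet (genSemigroup h) = ⋃ j, h j ⁻¹' juliaSet (genSemigroup h)) ∧
    (∀ z ∈ juliaSet (genSemigroup h), ∀ j, (h j ⁻¹' ({z} : Set X)).Nonempty) := by
  refine ⟨hJne, ((fatou_isOpen _).isClosed_compl).isCompact, ?_, ?_⟩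
  · ext z
    simp only [mem_iUnion, mem_preimage, juliaSet, mem_compl_iff]
    constructor
    · intro hz
      by_contra hcon
      push_neg at hcon
      exact hz (fatou_bwd hcont hcon)
    · rintro ⟨j, hj⟩ hzF
      exact hj (fatou_fwd hopen j hzF)
  · intro z _ j
    obtain ⟨x, hx⟩ := hsurj j z
    exact ⟨x, hx⟩
end

section
/- Let (L, (h_1, …, h_m)) be a backward self-similar system. If the graph Γ_1 is connected, then for every k ≥ 1 the graph Γ_k is connected. -/
open Set

/-- The graph `Γ_k`: vertices are the words of length `k`, and two distinct words `w, w'`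
are adjacent iff `h_w⁻¹(L) ∩ h_{w'}⁻¹(L) ≠ ∅`. -/
def bwdGraph {X : Type*} {m : ℕ} (h : Fin m → X → X) (L : Set X) (k : ℕ) :
    SimpleGraph (Fin k → Fin m) where
  Adj w w' := w ≠ w' ∧ (bwdPre h L (List.ofFn w) ∩ bwdPre h L (List.ofFn w')).Nonempty
  symm := by
    constructor
    intro w w' hw
    obtain ⟨hne, hx⟩ := hw
    exact ⟨hne.symm, by rwa [Set.inter_comm] at hx⟩
  loopless := by
    constructor
    intro w hw
    exact hw.1 rfl

lemma ofFn_fin_cons {m k : ℕ} (a : Fin m) (t : Fin k → Fin m) :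
    List.ofFn (Fin.cons a t : Fin (k + 1) → Fin m) = a :: List.ofFn t := by
  simp [List.ofFn_succ]

lemma ofFn_one {m : ℕ} (u : Fin 1 → Fin m) : List.ofFn u = [u 0] := by
  simp [List.ofFn_succ]

/-- For a backward self-similar system, if the graph `Γ₁` is connected then `Γ_k` is
connected for every `k ≥ 1`. -/
theorem backward_graphs_connected_of_first
    {X : Type*} [MetricSpace X] {m : ℕ} (hm : 1 ≤ m)
    (h : Fin m → X → X) (hcont : ∀ j, Continuous (h j))
    (L : Set X) (hLne : L.Nonempty) (hLcp : IsCompact L)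
    (hinv : L = ⋃ j, h j ⁻¹' L)
    (hfib : ∀ z ∈ L, ∀ j, (h j ⁻¹' ({z} : Set X)).Nonempty)
    (h1 : (bwdGraph h L 1).Connected) :
    ∀ k : ℕ, (bwdGraph h L (k + 1)).Connected := by
  -- preimage sets of nonempty words are contained in L
  have hsub : ∀ (w : List (Fin m)) (a : Fin m), bwdPre h L (a :: w) ⊆ L := by
    intro w
    induction w with
    | nil =>
      intro a x hx
      rw [hinv]
      exact mem_iUnion.2 ⟨a, hx⟩
    | cons b w ih =>
      intro a x hx
      rw [hinv]
      exact mem_iUnion.2 ⟨a, ih b hx⟩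
  -- every point of L belongs to some cylinder of any length
  have hcover : ∀ (k : ℕ), ∀ z ∈ L, ∃ w : Fin k → Fin m,
      z ∈ bwdPre h L (List.ofFn w) := by
    intro k
    induction k with
    | zero =>
      intro z hz
      exact ⟨fun i => i.elim0, by simpa [bwdPre] using hz⟩
    | succ k ih =>
      intro z hz
      rw [hinv] at hz
      obtain ⟨j, hj⟩ := mem_iUnion.1 hz
      obtain ⟨w, hw⟩ := ih _ hj
      refine ⟨Fin.cons j w, ?_⟩
      rw [ofFn_fin_cons]
      exact hw
  -- prepending a common letter preserves adjacency
  have hcons_adj : ∀ (k : ℕ) (a : Fin m) (t t' : Fin (k + 1) → Fin m),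
      (bwdGraph h L (k + 1)).Adj t t' →
      (bwdGraph h L (k + 2)).Adj (Fin.cons a t) (Fin.cons a t') := by
    intro k a t t' hadj
    obtain ⟨hne, z, hz1, hz2⟩ := hadj
    have hzL : z ∈ L := by
      rw [List.ofFn_succ] at hz1
      exact hsub _ _ hz1
    obtain ⟨x, hx⟩ := hfib z hzL a
    have hxz : h a x = z := hx
    refine ⟨?_, x, ?_, ?_⟩
    · intro hcontra
      refine hne (funext fun i => ?_)
      have := congrFun hcontra i.succ
      simpa using this
    · rw [ofFn_fin_cons]
      show h a x ∈ bwdPre h L (List.ofFn t)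
      rw [hxz]; exact hz1
    · rw [ofFn_fin_cons]
      show h a x ∈ bwdPre h L (List.ofFn t')
      rw [hxz]; exact hz2
  have hcons_reach : ∀ (k : ℕ) (a : Fin m) (t t' : Fin (k + 1) → Fin m),
      (bwdGraph h L (k + 1)).Reachable t t' →
      (bwdGraph h L (k + 2)).Reachable (Fin.cons a t) (Fin.cons a t') := by
    intro k a t t' hr
    exact hr.map
      ⟨(fun s => Fin.cons a s : (Fin (k + 1) → Fin m) → (Fin (k + 2) → Fin m)),
        fun hadj => hcons_adj k a _ _ hadj⟩
  intro k
  induction k with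
  | zero => exact h1
  | succ k ih =>
    have hne : Nonempty (Fin (k + 2) → Fin m) := ⟨fun _ => ⟨0, hm⟩⟩
    refine SimpleGraph.Connected.mk ?_
    intro u v
    have key : ∀ (p q : Fin 1 → Fin m), (bwdGraph h L 1).Reachable p q →
        ∀ t t' : Fin (k + 1) → Fin m,
        (bwdGraph h L (k + 2)).Reachable (Fin.cons (p 0) t) (Fin.cons (q 0) t') := by
      intro p q hr
      rw [SimpleGraph.reachable_iff_reflTransGen] at hr
      induction hr with
      | refl =>
        intro t t'
        exact hcons_reach k (p 0) t t' (ih.preconnected t t')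
      | @tail q r hpq hqr ih2 =>
        intro t t'
        obtain ⟨_, z, hz1, hz2⟩ := hqr
        rw [ofFn_one] at hz1 hz2
        have hq : h (q 0) z ∈ L := hz1
        have hr' : h (r 0) z ∈ L := hz2
        obtain ⟨s, hs⟩ := hcover (k + 1) _ hq
        obtain ⟨s', hs'⟩ := hcover (k + 1) _ hr'
        have hmid : (bwdGraph h L (k + 2)).Reachable (Fin.cons (q 0) s)
            (Fin.cons (r 0) s') := by
          by_cases heq : (Fin.cons (q 0) s : Fin (k + 2) → Fin m) = Fin.cons (r 0) s'
          · rw [heq]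
          · refine SimpleGraph.Adj.reachable ⟨heq, z, ?_, ?_⟩
            · rw [ofFn_fin_cons]; exact hs
            · rw [ofFn_fin_cons]; exact hs'
        exact ((ih2 t s).trans hmid).trans (hcons_reach k (r 0) s' t' (ih.preconnected s' t'))
    have := key (fun _ => u 0) (fun _ => v 0)
      (h1.preconnected (fun _ => u 0) (fun _ => v 0)) (Fin.tail u) (Fin.tail v)
    simpa [Fin.cons_self_tail] using this
end

section
/- Let (L, (h_1, …, h_m)) be a backward self-similar system satisfying the following four conditions: (a) the graph Γ_1 is connected; (b) (h_1 ∘ h_1)⁻¹(L) ∩ (⋃_{i ≠ 1} h_i⁻¹(L)) = ∅; (c) there exist mutually distinct j_1, j_2, j_3 ∈ {1, …, m} with j_1 = 1 such that h_{j_k}⁻¹(L) ∩ h_{j_{k+1}}⁻¹(L) ≠ ∅ for k = 1, 2, 3, where j_4 := j_1; and (d) for all s, t ∈ {1, …, m} such that s, t, 1 are mutually distinct, h_1⁻¹(L) ∩ h_s⁻¹(L) ∩ h_t⁻¹(L) = ∅. Then for every k ≥ 1 and all words w, w′ ∈ {1, …, m}^k such that w, w′ and (1)^k := (1, …, 1)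 are mutually distinct, one has h_{(1)^k}⁻¹(L) ∩ h_w⁻¹(L) ∩ h_{w′}⁻¹(L) = ∅; that is, every simplex of the nerve of the covering {h_w⁻¹(L) : |w| = k} that contains the vertex (1)^k has dimension at most 1. -/
open Set

lemma bwdPre_subset_L {X : Type*} {m : ℕ} (h : Fin m → X → X) (L : Set X)
    (hinv : L = ⋃ j, h j ⁻¹' L) : ∀ u : List (Fin m), bwdPre h L u ⊆ L := by
  intro u
  induction u with
  | nil => exact subset_rfl
  | cons a t ih =>
    intro x hx
    have hx' : h a x ∈ L := ih hx
    rw [hinv]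
    exact Set.mem_iUnion.mpr ⟨a, hx'⟩

lemma bwd_aux {X : Type*} {m : ℕ} [NeZero m]
    (h : Fin m → X → X) (L : Set X)
    (hinv : L = ⋃ j, h j ⁻¹' L)
    (hb : (h 0 ∘ h 0) ⁻¹' L ∩ (⋃ (i : Fin m) (_ : i ≠ 0), h i ⁻¹' L) = ∅)
    (hd : ∀ s t : Fin m, s ≠ t → s ≠ 0 → t ≠ 0 →
        h 0 ⁻¹' L ∩ h s ⁻¹' L ∩ h t ⁻¹' L = ∅) :
    ∀ (k : ℕ) (w w' : List (Fin m)), w.length = k + 1 → w'.length = k + 1 →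
      w ≠ w' → w ≠ List.replicate (k + 1) 0 → w' ≠ List.replicate (k + 1) 0 →
      bwdPre h L (List.replicate (k + 1) 0) ∩ bwdPre h L w ∩ bwdPre h L w' = ∅ := by
  intro k
  induction k with
  | zero =>
    intro w w' hw hw' hne h0w h0w'
    obtain ⟨s, rfl⟩ := List.length_eq_one_iff.mp hw
    obtain ⟨t, rfl⟩ := List.length_eq_one_iff.mp hw'
    have hs : s ≠ 0 := fun hs => h0w (by simp [hs, List.replicate])
    have ht : t ≠ 0 := fun ht => h0w' (by simp [ht, List.replicate])
    have hst : s ≠ t := fun hst => hne (by rw [hst])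
    have := hd s t hst hs ht
    simpa [bwdPre, List.replicate] using this
  | succ k ih =>
    intro w w' hw hw' hne h0w h0w'
    match w, w' with
    | a :: v, a' :: v' =>
      have hv : v.length = k + 1 := by simpa using hw
      have hv' : v'.length = k + 1 := by simpa using hw'
      rw [Set.eq_empty_iff_forall_notMem]
      rintro x ⟨⟨hx0, hxw⟩, hxw'⟩
      have hx0' : x ∈ bwdPre h L (0 :: List.replicate (k + 1) 0) := by
        rwa [show List.replicate (k + 2) (0 : Fin m) = 0 :: List.replicate (k + 1) 0 from rfl] at hx0
      have hrep1 : List.replicate (k + 1) (0 : Fin m) = 0 :: List.replicate k 0 := rfl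
      have hcomp : x ∈ (h 0 ∘ h 0) ⁻¹' L := by
        have h1 : h 0 x ∈ bwdPre h L (List.replicate (k + 1) 0) := hx0'
        rw [hrep1] at h1
        exact bwdPre_subset_L h L hinv _ h1
      have hbne := Set.eq_empty_iff_forall_notMem.mp hb x
      have key : ∀ b : Fin m, x ∈ h b ⁻¹' L → b = 0 := by
        intro b hbL
        by_contra hb0
        exact hbne ⟨hcomp, Set.mem_iUnion.mpr ⟨b, Set.mem_iUnion.mpr ⟨hb0, hbL⟩⟩⟩
      have ha : a = 0 := key a (bwdPre_subset_L h L hinv v hxw)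
      have ha' : a' = 0 := key a' (bwdPre_subset_L h L hinv v' hxw')
      subst ha; subst ha'
      have hvne : v ≠ v' := fun hvv => hne (by rw [hvv])
      have h0v : v ≠ List.replicate (k + 1) 0 := fun hvv => h0w (by rw [hvv]; rfl)
      have h0v' : v' ≠ List.replicate (k + 1) 0 := fun hvv => h0w' (by rw [hvv]; rfl)
      have := Set.eq_empty_iff_forall_notMem.mp
        (ih v v' hv hv' hvne h0v h0v') (h 0 x)
      exact this ⟨⟨hx0', hxw⟩, hxw'⟩

/-- Under conditions (a)–(d) of Theorem 1.4 (with the letter `1` rendered as `0 : Fin m`),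
for every `k ≥ 1` and all words `w, w'` of length `k` such that `w`, `w'` and
`(1)^k` are mutually distinct, `h_{(1)^k}⁻¹(L) ∩ h_w⁻¹(L) ∩ h_{w'}⁻¹(L) = ∅`; that is,
every simplex of the nerve of `{h_w⁻¹(L) : |w| = k}` containing the vertex `(1)^k`
has dimension at most `1`. -/
theorem backward_vertex_one_low_dimensional
    {X : Type*} [MetricSpace X] {m : ℕ} [NeZero m] (hm : 1 ≤ m)
    (h : Fin m → X → X) (hcont : ∀ j, Continuous (h j))
    (L : Set X) (hLne : L.Nonempty) (hLcp : IsCompact L)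
    (hinv : L = ⋃ j, h j ⁻¹' L)
    (hfib : ∀ z ∈ L, ∀ j, (h j ⁻¹' ({z} : Set X)).Nonempty)
    (ha : (bwdGraph h L 1).Connected)
    (hb : (h 0 ∘ h 0) ⁻¹' L ∩ (⋃ (i : Fin m) (_ : i ≠ 0), h i ⁻¹' L) = ∅)
    (hc : ∃ j₁ j₂ j₃ : Fin m, j₁ ≠ j₂ ∧ j₂ ≠ j₃ ∧ j₃ ≠ j₁ ∧ j₁ = 0 ∧
        (h j₁ ⁻¹' L ∩ h j₂ ⁻¹' L).Nonempty ∧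
        (h j₂ ⁻¹' L ∩ h j₃ ⁻¹' L).Nonempty ∧
        (h j₃ ⁻¹' L ∩ h j₁ ⁻¹' L).Nonempty)
    (hd : ∀ s t : Fin m, s ≠ t → s ≠ 0 → t ≠ 0 →
        h 0 ⁻¹' L ∩ h s ⁻¹' L ∩ h t ⁻¹' L = ∅) :
    ∀ (k : ℕ) (w w' : Fin (k + 1) → Fin m),
      w ≠ w' → w ≠ (fun _ => 0) → w' ≠ (fun _ => 0) →
      bwdPre h L (List.ofFn (fun _ : Fin (k + 1) => (0 : Fin m))) ∩
        bwdPre h L (List.ofFn w) ∩ bwdPre h L (List.ofFn w') = ∅ := by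
  intro k w w' hne h0w h0w'
  rw [List.ofFn_const]
  apply bwd_aux h L hinv hb hd k
  · simp
  · simp
  · exact fun hh => hne (List.ofFn_injective hh)
  · rw [← List.ofFn_const]
    exact fun hh => h0w (List.ofFn_injective hh)
  · rw [← List.ofFn_const]
    exact fun hh => h0w' (List.ofFn_injective hh)
end
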